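/- arXiv:2307.01340 — 2 statements merged into one kernel-verified Lean document; each statement's English description precedes it below -/
import Mathlib

section
/- (Theorem 2, formula (1), case r < s.) Let 0 ≤ r < s ≤ N. Let P be the constant (2n+N)×(2n+N) matrix Σ_{i=1}^{n}(E_{i,n+i} − E_{n+i,i}). For every x = (λ, μ, c) ∈ Ω × ℝⁿ × ℝᴺ, let J(x) be the Jacobian matrix of M_{r→s} at x and set ȳ = M_{r→s}(x). Then J(x) P J(x)ᵀ = Σ_{i=1}^{n} λ_i^{r−s} (E_{i,n+i} − E_{n+i,i}) + Σ_{j=1}^{s−r} ( X_{n−j+1}^{(s)}(ȳ) e_{2n+r+j}ᵀ − e_{2n+r+j} X_{n−j+1}^{(s)}(ȳ)ᵀ ), where X_k^{(s)}(ȳ) is regarded as a column vector. Equivalently, the curve-r canonical Poisson bivector π_r, expressed in the curve-s variables, equals Σ_i λ̄_i^{r−s} ∂/∂λ̄_i ∧ ∂/∂μ̄_i + Σ_{j=1}^{s−r} X_{n−j+1} ∧ ∂/∂c̄_{r+j}. -/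
open Finset Function Matrix

noncomputable section

/-- Evaluation of a Laurent polynomial `p ∈ ℝ[λ,λ⁻¹]` at a real number `x`
(meaningful for `x ≠ 0`, using `zpow`). -/
def leval (p : LaurentPolynomial ℝ) (x : ℝ) : ℝ :=
  Finsupp.sum p.coeff fun k a => a * x ^ k

/-- Index type for the ordered coordinates `(λ_1,…,λ_n, μ_1,…,μ_n, c_1,…,c_N)`. -/
abbrev Idx (n N : ℕ) := Fin n ⊕ (Fin n ⊕ Fin N)

/-- The extended phase space `ℝ^{2n+N}`. -/
abbrev Phase (n N : ℕ) := Idx n N → ℝ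

def lamOf {n N : ℕ} (x : Phase n N) (i : Fin n) : ℝ := x (Sum.inl i)
def muOf {n N : ℕ} (x : Phase n N) (i : Fin n) : ℝ := x (Sum.inr (Sum.inl i))
def cOf {n N : ℕ} (x : Phase n N) (j : Fin N) : ℝ := x (Sum.inr (Sum.inr j))

/-- The subset `Ω × ℝⁿ × ℝᴺ` of the extended phase space: points whose `λ`-coordinates are
nonzero and pairwise distinct. -/
def Reg (n N : ℕ) : Set (Phase n N) :=
  {x | (∀ i, lamOf x i ≠ 0) ∧ Function.Injective (lamOf x)}

/-- `H` is the family of curve-`s` Stäckel Hamiltonians on the extended phase space: it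
satisfies the curve-`s` separation relations
`σ(λᵢ)λᵢ⁻ˢ + Σ_{k=s+1}^{N} c_k λᵢ^{n+k-s-1} + Σ_{q=1}^{n} h_q λᵢ^{n-q}
  + Σ_{k=1}^{s} c_k λᵢ^{k-s-1} = f(λᵢ) λᵢˢ μᵢ²`
at every point of `Ω × ℝⁿ × ℝᴺ` (0-based indexing: `H x q` is `h_{q+1}`, etc.).  These
relations determine `H` uniquely there, by invertibility of the Vandermonde matrix. -/
def SepSolP (n N : ℕ) (f σ : LaurentPolynomial ℝ) (s : ℕ)
    (H : Phase n N → Fin n → ℝ) : Prop :=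
  ∀ x ∈ Reg n N, ∀ i : Fin n,
    leval σ (lamOf x i) * lamOf x i ^ (-(s : ℤ))
      + (∑ j : Fin N,
          if s ≤ (j : ℕ) then cOf x j * lamOf x i ^ ((n : ℤ) + (j : ℕ) - (s : ℕ))
          else cOf x j * lamOf x i ^ (((j : ℕ) : ℤ) - (s : ℕ)))
      + (∑ q : Fin n, H x q * lamOf x i ^ ((n : ℤ) - 1 - (q : ℕ)))
      = leval f (lamOf x i) * lamOf x i ^ (s : ℤ) * muOf x i ^ 2

/-- Partial derivative `∂F/∂x_l` of a scalar function on the extended phase space. -/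
def pd {n N : ℕ} (F : Phase n N → ℝ) (x : Phase n N) (l : Idx n N) : ℝ :=
  deriv (fun t => F (Function.update x l t)) (x l)

/-- The Hamiltonian vector field `X_k^{(s)}` of the curve-`s` system: its components in
the ordered coordinates `(λ, μ, c)` are
`(∂h_k/∂μ_1, …, ∂h_k/∂μ_n, -∂h_k/∂λ_1, …, -∂h_k/∂λ_n, 0, …, 0)`. -/
def XFP {n N : ℕ} (H : Phase n N → Fin n → ℝ) (k : Fin n) (x : Phase n N) : Phase n N :=
  Sum.elim (fun i => pd (fun y => H y k) x (Sum.inr (Sum.inl i)))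
    (Sum.elim (fun i => - pd (fun y => H y k) x (Sum.inl i)) fun _ => 0)

/-- The Miura map `M_{r→s}` on the extended phase space (for `r ≤ s ≤ N ≤ n`), built from
the curve-`r` Hamiltonians `Hr`: `λ̄ᵢ = λᵢ`, `μ̄ᵢ = λᵢ^{r-s} μᵢ`,
`c̄ᵢ = h^{(r)}_{n+r-i+1}` for `i = r+1,…,s`, and `c̄ᵢ = cᵢ` otherwise
(1-based indexing in the paper; 0-based internally). -/
def MrsP (n N : ℕ) (hn : 1 ≤ n) (r s : ℕ) (Hr : Phase n N → Fin n → ℝ)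
    (x : Phase n N) : Phase n N :=
  Sum.elim (fun i => lamOf x i)
    (Sum.elim (fun i => lamOf x i ^ ((r : ℤ) - (s : ℕ)) * muOf x i)
      fun j : Fin N =>
        if h : r ≤ (j : ℕ) ∧ (j : ℕ) < s then
          Hr x ⟨n + r - (j : ℕ) - 1, by obtain ⟨h1, h2⟩ := h; omega⟩
        else cOf x j)

/-- The Jacobian matrix of a map `M` of the extended phase space at the point `x`, in the
ordered coordinates `(λ_1,…,λ_n, μ_1,…,μ_n, c_1,…,c_N)`. -/
def Jac (n N : ℕ) (M : Phase n N → Phase n N) (x : Phase n N) :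
    Matrix (Idx n N) (Idx n N) ℝ :=
  Matrix.of fun a b => fderiv ℝ (fun y => M y a) x (Pi.single b 1)

/-- The canonical Poisson matrix `P = Σᵢ (E_{i,n+i} - E_{n+i,i})`. -/
def Pcan (n N : ℕ) : Matrix (Idx n N) (Idx n N) ℝ :=
  ∑ i : Fin n,
    (Matrix.single (Sum.inl i) (Sum.inr (Sum.inl i)) (1 : ℝ)
      - Matrix.single (Sum.inr (Sum.inl i)) (Sum.inl i) (1 : ℝ))

/-!
On `Ω × ℝⁿ × ℝᴺ` the curve-`k` separation relations say that every `(λᵢ, μᵢ)` lies on the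
separation curve `Φ_k(t, m) = f(t) tᵏ m² - σ(t) t⁻ᵏ - Σ_u w_u t^{e_k(u)} = 0`, whose unknown
coefficients `w = (c, h)` enter linearly. In `h` this is a Vandermonde system `V(λ) h = b`, so the
Hamiltonians are smooth, and differentiating the relations gives
`∂h_q/∂λ_a = (V⁻¹)_{qa} ∂_tΦ(λ_a, μ_a)` and `∂h_q/∂μ_a = (V⁻¹)_{qa} ∂_mΦ(λ_a, μ_a)`.

The Miura map only relabels the monomials: `Φ_s(t, t^{r-s} m; w̄) = t^{r-s} Φ_r(t, m; w)`, where
`w̄` is `w` composed with a bijection of the unknowns. Hence the curve-`s` Hamiltonians at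
`M_{r→s}(x)` are the relabelled curve-`r` data, and the partial derivatives of `Φ_s` there are
explicit in those of `Φ_r` at `x`. The rows of the Jacobian and the vector fields `X^{(s)}` are then
all expressed through `V⁻¹`, `∂_tΦ_r` and `∂_mΦ_r`, and the entries of `J P Jᵀ` are compared
directly; the block of the new `c`-coordinates vanishes because `∂_tΦ ∂_mΦ - ∂_mΦ ∂_tΦ = 0`, i.e.
the curve-`r` Hamiltonians Poisson-commute.
-/

open Filter Topology

section MatrixCalculus

variable {𝕜 E ι : Type*} [NontriviallyNormedField 𝕜] [NormedAddCommGroup E] [NormedSpace 𝕜 E]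
  [Fintype ι] [DecidableEq ι] {A : E → Matrix ι ι 𝕜} {x : E}

theorem differentiableAt_det (h : ∀ i j, DifferentiableAt 𝕜 (fun y => A y i j) x) :
    DifferentiableAt 𝕜 (fun y => (A y).det) x := by
  simp only [det_apply, Units.smul_def, zsmul_eq_mul]
  fun_prop

theorem differentiableAt_inv_apply (h : ∀ i j, DifferentiableAt 𝕜 (fun y => A y i j) x)
    (hdet : (A x).det ≠ 0) (i j : ι) : DifferentiableAt 𝕜 (fun y => (A y)⁻¹ i j) x := by
  simp only [Matrix.inv_def, Ring.inverse_eq_inv', Matrix.smul_apply, smul_eq_mul, adjugate_apply]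
  refine ((differentiableAt_det h).inv hdet).mul (differentiableAt_det fun k l => ?_)
  by_cases hk : k = j
  · simp only [hk, updateRow_self]
    fun_prop
  · simp only [updateRow_ne hk]
    exact h k l

end MatrixCalculus

theorem Matrix.eq_inv_mulVec_of_mulVec_eq {K ι : Type*} [Field K] [Fintype ι] [DecidableEq ι]
    {A : Matrix ι ι K} (hA : A.det ≠ 0) {v b : ι → K} (h : A *ᵥ v = b) : v = A⁻¹ *ᵥ b := by
  rw [← h, mulVec_mulVec, nonsing_inv_mul _ (isUnit_iff_ne_zero.mpr hA), one_mulVec]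

theorem differentiableAt_leval (p : LaurentPolynomial ℝ) {t : ℝ} (ht : t ≠ 0) :
    DifferentiableAt ℝ (leval p) t :=
  DifferentiableAt.fun_sum fun _ _ =>
    (differentiableAt_const _).mul (differentiableAt_zpow.mpr (Or.inl ht))

section SeparationCurve

variable {n N : ℕ}

def sepExp (k : ℕ) : Fin N ⊕ Fin n → ℤ
  | .inl j => if k ≤ (j : ℕ) then (n : ℤ) + (j : ℕ) - (k : ℕ) else ((j : ℕ) : ℤ) - (k : ℕ)
  | .inr q => (n : ℤ) - 1 - (q : ℕ)

theorem sepExp_injective (k : ℕ) : Injective (sepExp (N := N) (n := n) k) := by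
  rintro (j | q) (j' | q') h <;> simp only [sepExp] at h <;> (try split_ifs at h) <;>
    first | (congr 1; ext; omega) | omega

def sepPoly (k : ℕ) (w : Fin N ⊕ Fin n → ℝ) (t : ℝ) : ℝ :=
  ∑ u, w u * t ^ sepExp k u

variable (f σ : LaurentPolynomial ℝ) (k : ℕ) (w : Fin N ⊕ Fin n → ℝ)

def sepCurve (t m : ℝ) : ℝ :=
  leval f t * t ^ (k : ℤ) * m ^ 2 - leval σ t * t ^ (-(k : ℤ)) - sepPoly k w t

def sepCurveDerivLam (t m : ℝ) : ℝ :=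
  deriv (fun τ => sepCurve f σ k w τ m) t

def sepCurveDerivMu (t m : ℝ) : ℝ :=
  2 * leval f t * t ^ (k : ℤ) * m

theorem differentiableAt_sepPoly {t : ℝ} (ht : t ≠ 0) : DifferentiableAt ℝ (sepPoly k w) t := by
  unfold sepPoly
  fun_prop (disch := exact Or.inl ht)

theorem hasDerivAt_sepCurve_comp {g : ℝ → ℝ} {g' t : ℝ} (hg : HasDerivAt g g' t) (ht : t ≠ 0) :
    HasDerivAt (fun τ => sepCurve f σ k w τ (g τ))
      (sepCurveDerivLam f σ k w t (g t) + sepCurveDerivMu f k t (g t) * g') t := by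
  have hz : ∀ e : ℤ, DifferentiableAt ℝ (fun τ : ℝ => τ ^ e) t := fun e =>
    differentiableAt_zpow.mpr (Or.inl ht)
  have hF : HasDerivAt (fun τ => leval f τ * τ ^ (k : ℤ)) _ t :=
    ((differentiableAt_leval f ht).fun_mul (hz k)).hasDerivAt
  have hG : HasDerivAt (fun τ => leval σ τ * τ ^ (-(k : ℤ))) _ t :=
    ((differentiableAt_leval σ ht).fun_mul (hz (-k))).hasDerivAt
  have hP := (differentiableAt_sepPoly k w ht).hasDerivAt
  have hfrozen := ((hF.mul_const (g t ^ 2)).fun_sub hG).fun_sub hP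
  have hmoving := ((hF.fun_mul (hg.fun_pow 2)).fun_sub hG).fun_sub hP
  unfold sepCurveDerivLam sepCurve
  rw [hfrozen.deriv, sepCurveDerivMu]
  exact hmoving.congr_deriv (by push_cast; ring)

theorem hasDerivAt_sepCurve_lam {t : ℝ} (ht : t ≠ 0) (m : ℝ) :
    HasDerivAt (fun τ => sepCurve f σ k w τ m) (sepCurveDerivLam f σ k w t m) t := by
  simpa using hasDerivAt_sepCurve_comp f σ k w (hasDerivAt_const t m) ht

theorem hasDerivAt_sepCurve_mu (t m : ℝ) :
    HasDerivAt (sepCurve f σ k w t) (sepCurveDerivMu f k t m) m := by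
  have := (((hasDerivAt_pow 2 m).const_mul (leval f t * t ^ (k : ℤ))).sub_const
    (leval σ t * t ^ (-(k : ℤ)))).sub_const (sepPoly k w t)
  exact this.congr_deriv (by simp only [sepCurveDerivMu]; ring)

theorem sepCurveDerivMu_rescale {r s : ℕ} {t : ℝ} (ht : t ≠ 0) (m : ℝ) :
    sepCurveDerivMu f s t (t ^ ((r : ℤ) - (s : ℕ)) * m) = sepCurveDerivMu f r t m := by
  have hf : t ^ (s : ℤ) * t ^ ((r : ℤ) - (s : ℕ)) = t ^ (r : ℤ) := by
    rw [← zpow_add₀ ht]; ring_nf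
  simp only [sepCurveDerivMu]
  linear_combination 2 * leval f t * m * hf

theorem sepCurve_sub_sepCurve (c : Fin N → ℝ) (h h' : Fin n → ℝ) (t m : ℝ) :
    sepCurve f σ k (Sum.elim c h) t m - sepCurve f σ k (Sum.elim c h') t m
      = ∑ q, (h' q - h q) * t ^ (n - 1 - (q : ℕ)) := by
  have hexp : ∀ q : Fin n, t ^ ((n : ℤ) - 1 - (q : ℕ)) = t ^ (n - 1 - (q : ℕ)) := fun q => by
    rw [← zpow_natCast]; congr 1; omega
  simp only [sepCurve, sepPoly, Fintype.sum_sum_type, Sum.elim_inl, Sum.elim_inr, sepExp, hexp,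
    sub_mul, Finset.sum_sub_distrib]
  ring

end SeparationCurve

section MiuraRelabel

variable {n N : ℕ}

-- The unknown placed in slot `u` after the Miura map is the one whose monomial, multiplied by
-- `t^(r-s)`, becomes the monomial of slot `u` (see `sepExp_miuraRelabel`).
def miuraRelabel (r s : ℕ) (hsN : s ≤ N) (hNn : N ≤ n) : Fin N ⊕ Fin n → Fin N ⊕ Fin n
  | .inl j => if h : r ≤ (j : ℕ) ∧ (j : ℕ) < s then .inr ⟨n + r - (j : ℕ) - 1, by omega⟩
      else .inl j
  | .inr q => if h : (q : ℕ) < s - r then .inl ⟨s - 1 - (q : ℕ), by omega⟩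
      else .inr ⟨(q : ℕ) - (s - r), by omega⟩

variable {r s : ℕ} (hrs : r ≤ s) (hsN : s ≤ N) (hNn : N ≤ n)
include hrs

theorem sepExp_miuraRelabel (u : Fin N ⊕ Fin n) :
    sepExp s u = sepExp r (miuraRelabel r s hsN hNn u) + ((r : ℤ) - (s : ℕ)) := by
  rcases u with j | q <;> simp only [miuraRelabel] <;> split_ifs <;> simp only [sepExp] <;>
    (try split_ifs) <;> omega

theorem miuraRelabel_bijective : Bijective (miuraRelabel r s hsN hNn) :=
  Finite.injective_iff_bijective.mp fun u v h => sepExp_injective s <| by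
    rw [sepExp_miuraRelabel hrs hsN hNn u, sepExp_miuraRelabel hrs hsN hNn v, h]

theorem sepPoly_comp_miuraRelabel (w : Fin N ⊕ Fin n → ℝ) {t : ℝ} (ht : t ≠ 0) :
    sepPoly s (w ∘ miuraRelabel r s hsN hNn) t = t ^ ((r : ℤ) - (s : ℕ)) * sepPoly r w t := by
  rw [sepPoly, sepPoly, Finset.mul_sum, ← (miuraRelabel_bijective hrs hsN hNn).sum_comp
    (fun u => t ^ ((r : ℤ) - (s : ℕ)) * (w u * t ^ sepExp r u))]
  refine Finset.sum_congr rfl fun u _ => ?_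
  rw [Function.comp_apply, sepExp_miuraRelabel hrs hsN hNn, zpow_add₀ ht]
  ring

variable (f σ : LaurentPolynomial ℝ) (w : Fin N ⊕ Fin n → ℝ) {t : ℝ} (ht : t ≠ 0) (m : ℝ)
include ht

theorem sepCurve_comp_miuraRelabel :
    sepCurve f σ s (w ∘ miuraRelabel r s hsN hNn) t (t ^ ((r : ℤ) - (s : ℕ)) * m)
      = t ^ ((r : ℤ) - (s : ℕ)) * sepCurve f σ r w t m := by
  have hσ : t ^ ((r : ℤ) - (s : ℕ)) * t ^ (-(r : ℤ)) = t ^ (-(s : ℤ)) := by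
    rw [← zpow_add₀ ht]; ring_nf
  have hf : t ^ (s : ℤ) * t ^ ((r : ℤ) - (s : ℕ)) = t ^ (r : ℤ) := by
    rw [← zpow_add₀ ht]; ring_nf
  simp only [sepCurve, sepPoly_comp_miuraRelabel hrs hsN hNn w ht]
  linear_combination leval f t * t ^ ((r : ℤ) - (s : ℕ)) * m ^ 2 * hf + leval σ t * hσ

theorem sepCurveDerivLam_comp_miuraRelabel (hcurve : sepCurve f σ r w t m = 0) :
    sepCurveDerivLam f σ s (w ∘ miuraRelabel r s hsN hNn) t (t ^ ((r : ℤ) - (s : ℕ)) * m)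
      = t ^ ((r : ℤ) - (s : ℕ)) * sepCurveDerivLam f σ r w t m
        - ((r : ℤ) - (s : ℕ) : ℤ) * t ^ ((r : ℤ) - (s : ℕ) - 1) * m * sepCurveDerivMu f r t m := by
  have hscale := (hasDerivAt_zpow ((r : ℤ) - (s : ℕ)) t (Or.inl ht)).mul_const m
  have hlhs := hasDerivAt_sepCurve_comp f σ s (w ∘ miuraRelabel r s hsN hNn) hscale ht
  have hrhs := (hasDerivAt_zpow ((r : ℤ) - (s : ℕ)) t (Or.inl ht)).fun_mul
    (hasDerivAt_sepCurve_lam f σ r w ht m)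
  have heq : (fun τ =>
        sepCurve f σ s (w ∘ miuraRelabel r s hsN hNn) τ (τ ^ ((r : ℤ) - (s : ℕ)) * m))
      =ᶠ[𝓝 t] fun τ => τ ^ ((r : ℤ) - (s : ℕ)) * sepCurve f σ r w τ m := by
    filter_upwards [eventually_ne_nhds ht] with τ hτ
    exact sepCurve_comp_miuraRelabel hrs hsN hNn f σ w hτ m
  have := hlhs.unique (hrhs.congr_of_eventuallyEq heq)
  rw [hcurve, sepCurveDerivMu_rescale f ht] at this
  linear_combination this

end MiuraRelabel

section PhaseSpace

variable {n N : ℕ}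

theorem isOpen_Reg : IsOpen (Reg n N) := by
  have hcont : ∀ i, Continuous fun x : Phase n N => lamOf x i := fun i => continuous_apply _
  have hReg : Reg n N = (⋂ i, {x | lamOf x i ≠ 0})
      ∩ ⋂ i, ⋂ j, ⋂ (_ : i ≠ j), {x | lamOf x i ≠ lamOf x j} := by
    ext x
    simp only [Reg, Injective, Set.mem_ofPred_eq, Set.mem_inter_iff, Set.mem_iInter]
    exact and_congr_right' ⟨fun h i j hij hx => hij (h hx),
      fun h i j hx => by_contra fun hij => h i j hij hx⟩
  rw [hReg]
  exact (isOpen_iInter_of_finite fun i => isOpen_ne_fun (hcont i) continuous_const).inter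
    (isOpen_iInter_of_finite fun i => isOpen_iInter_of_finite fun j =>
      isOpen_iInter_of_finite fun _ => isOpen_ne_fun (hcont i) (hcont j))

theorem eventually_update_mem_Reg {x : Phase n N} (hx : x ∈ Reg n N) (l : Idx n N) :
    ∀ᶠ τ in 𝓝 (x l), update x l τ ∈ Reg n N := by
  have hcont : ContinuousAt (update x l) (x l) := (hasDerivAt_update x l (x l)).continuousAt
  refine hcont (?_ : Reg n N ∈ 𝓝 (update x l (x l)))
  rw [update_eq_self]
  exact isOpen_Reg.mem_nhds hx

theorem cOf_update_inl (x : Phase n N) (a : Fin n) (τ : ℝ) :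
    cOf (update x (Sum.inl a) τ) = cOf x :=
  funext fun _ => update_of_ne (by simp) _ _

theorem cOf_update_inr_inl (x : Phase n N) (a : Fin n) (τ : ℝ) :
    cOf (update x (Sum.inr (Sum.inl a)) τ) = cOf x :=
  funext fun _ => update_of_ne (by simp) _ _

def lamVandermonde (y : Phase n N) : Matrix (Fin n) (Fin n) ℝ :=
  of fun i q => lamOf y i ^ (n - 1 - (q : ℕ))

theorem det_lamVandermonde_ne_zero {y : Phase n N} (hy : y ∈ Reg n N) :
    (lamVandermonde y).det ≠ 0 := by
  have hrev : lamVandermonde y = (vandermonde (lamOf y)).submatrix id Fin.revPerm := by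
    ext i q
    simp only [lamVandermonde, of_apply, submatrix_apply, id, vandermonde_apply,
      Fin.revPerm_apply, Fin.val_rev]
    congr 1
    omega
  rw [hrev, det_permute', mul_ne_zero_iff]
  exact ⟨by simp, det_vandermonde_ne_zero_iff.mpr hy.2⟩

variable (f σ : LaurentPolynomial ℝ) (k : ℕ)

def sepRhs (y : Phase n N) : Fin n → ℝ :=
  fun i => sepCurve f σ k (Sum.elim (cOf y) (0 : Fin n → ℝ)) (lamOf y i) (muOf y i)

theorem sepCurve_eq_sepRhs_sub_mulVec (y : Phase n N) (h : Fin n → ℝ) (i : Fin n) :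
    sepCurve f σ k (Sum.elim (cOf y) h) (lamOf y i) (muOf y i)
      = sepRhs f σ k y i - (lamVandermonde y *ᵥ h) i := by
  rw [eq_sub_iff_add_eq, ← eq_sub_iff_add_eq', sepRhs, sepCurve_sub_sepCurve]
  simp [mulVec, dotProduct, lamVandermonde, mul_comm]

def sepCoeffs (H : Phase n N → Fin n → ℝ) (y : Phase n N) : Fin N ⊕ Fin n → ℝ :=
  Sum.elim (cOf y) (H y)

theorem sepSolP_iff {H : Phase n N → Fin n → ℝ} :
    SepSolP n N f σ k H ↔
      ∀ y ∈ Reg n N, ∀ i, sepCurve f σ k (sepCoeffs H y) (lamOf y i) (muOf y i) = 0 := by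
  have hsum : ∀ y i, sepPoly k (sepCoeffs H y) (lamOf y i)
      = (∑ j : Fin N, if k ≤ (j : ℕ) then cOf y j * lamOf y i ^ ((n : ℤ) + (j : ℕ) - (k : ℕ))
          else cOf y j * lamOf y i ^ (((j : ℕ) : ℤ) - (k : ℕ)))
        + ∑ q : Fin n, H y q * lamOf y i ^ ((n : ℤ) - 1 - (q : ℕ)) := by
    intro y i
    simp only [sepPoly, Fintype.sum_sum_type, sepCoeffs, Sum.elim_inl, Sum.elim_inr, sepExp]
    congr 1
    exact Finset.sum_congr rfl fun j _ => by split_ifs <;> rfl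
  simp only [SepSolP, sepCurve, hsum]
  refine forall₂_congr fun y _ => forall_congr' fun i => ?_
  constructor <;> intro h <;> linarith

theorem differentiableAt_sepRhs {x : Phase n N} (hx : x ∈ Reg n N) (i : Fin n) :
    DifferentiableAt ℝ (fun y => sepRhs f σ k y i) x := by
  have hlam : DifferentiableAt ℝ (fun y : Phase n N => lamOf y i) x := differentiableAt_apply _ _
  have hl : ∀ p, DifferentiableAt ℝ (fun y => leval p (lamOf y i)) x := fun p =>
    DifferentiableAt.comp (g := leval p) x (differentiableAt_leval p (hx.1 i)) hlam
  have hz : ∀ e : ℤ, DifferentiableAt ℝ (fun y => lamOf y i ^ e) x := fun e =>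
    hlam.zpow (Or.inl (hx.1 i))
  simp only [sepRhs, sepCurve, sepPoly, Fintype.sum_sum_type, Sum.elim_inl, Sum.elim_inr,
    Pi.zero_apply, zero_mul, Finset.sum_const_zero, add_zero]
  unfold muOf cOf
  fun_prop

theorem DifferentiableAt.hasDerivAt_comp_update {F : Phase n N → ℝ} {x : Phase n N}
    (hF : DifferentiableAt ℝ F x) (l : Idx n N) :
    HasDerivAt (fun t => F (update x l t)) (fderiv ℝ F x (Pi.single l 1)) (x l) := by
  have hF' : HasFDerivAt F (fderiv ℝ F x) (update x l (x l)) := by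
    rw [update_eq_self]; exact hF.hasFDerivAt
  exact hF'.comp_hasDerivAt (x l) (hasDerivAt_update x l (x l))

theorem pd_eq_fderiv {F : Phase n N → ℝ} {x : Phase n N} (hF : DifferentiableAt ℝ F x)
    (l : Idx n N) : pd F x l = fderiv ℝ F x (Pi.single l 1) :=
  (hF.hasDerivAt_comp_update l).deriv

namespace SepSolP

variable {f σ k} {H : Phase n N → Fin n → ℝ} (hH : SepSolP n N f σ k H)
include hH

theorem sepCurve_eq_zero {y : Phase n N} (hy : y ∈ Reg n N) (i : Fin n) :
    sepCurve f σ k (sepCoeffs H y) (lamOf y i) (muOf y i) = 0 :=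
  (sepSolP_iff f σ k).mp hH y hy i

theorem lamVandermonde_mulVec {y : Phase n N} (hy : y ∈ Reg n N) :
    lamVandermonde y *ᵥ H y = sepRhs f σ k y := by
  funext i
  have := hH.sepCurve_eq_zero hy i
  rw [sepCoeffs, sepCurve_eq_sepRhs_sub_mulVec] at this
  linarith

theorem eq_of_sepCurve_eq_zero {y : Phase n N} (hy : y ∈ Reg n N) {h : Fin n → ℝ}
    (hh : ∀ i, sepCurve f σ k (Sum.elim (cOf y) h) (lamOf y i) (muOf y i) = 0) : H y = h := by
  have hinj := mulVec_injective_iff_isUnit.mpr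
    ((isUnit_iff_isUnit_det _).mpr (isUnit_iff_ne_zero.mpr (det_lamVandermonde_ne_zero hy)))
  refine hinj (hH.lamVandermonde_mulVec hy ▸ funext fun i => ?_)
  have := hh i
  rw [sepCurve_eq_sepRhs_sub_mulVec] at this
  linarith

theorem differentiableAt {x : Phase n N} (hx : x ∈ Reg n N) (q : Fin n) :
    DifferentiableAt ℝ (fun y => H y q) x := by
  have hsol : (fun y => H y q) =ᶠ[𝓝 x]
      fun y => ∑ i, (lamVandermonde y)⁻¹ q i * sepRhs f σ k y i := by
    filter_upwards [isOpen_Reg.mem_nhds hx] with y hy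
    rw [Matrix.eq_inv_mulVec_of_mulVec_eq (det_lamVandermonde_ne_zero hy)
      (hH.lamVandermonde_mulVec hy)]
    rfl
  refine hsol.differentiableAt_iff.mpr (DifferentiableAt.fun_sum fun i _ => ?_)
  refine (differentiableAt_inv_apply (fun i q => ?_) (det_lamVandermonde_ne_zero hx) q i).mul
    (differentiableAt_sepRhs f σ k hx i)
  exact (differentiableAt_apply _ _).pow _

theorem pd_eq_of_hasDerivAt {x : Phase n N} (hx : x ∈ Reg n N) (l : Idx n N) (a : Fin n) {c : ℝ}
    (hR : ∀ i, HasDerivAt (fun τ => sepCurve f σ k (Sum.elim (cOf (update x l τ)) (H x))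
      (lamOf (update x l τ) i) (muOf (update x l τ) i)) ((Pi.single a c : Fin n → ℝ) i) (x l))
    (q : Fin n) : pd (fun y => H y q) x l = (lamVandermonde x)⁻¹ q a * c := by
  -- On `Reg`, `Φ(·; H x) = Φ(·; H y) + V (H y - H x) = V (H y - H x)`; differentiate along `l`.
  suffices hsys : lamVandermonde x *ᵥ (fun q => pd (fun y => H y q) x l) = Pi.single a c by
    simpa using congrFun (Matrix.eq_inv_mulVec_of_mulVec_eq (det_lamVandermonde_ne_zero hx) hsys) q
  funext i
  have hlam : HasDerivAt (fun τ => lamOf (update x l τ) i) _ (x l) :=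
    hasDerivAt_pi.mp (_root_.hasDerivAt_update x l (x l)) (Sum.inl i)
  have hmoving : HasDerivAt
      (fun τ => ∑ q, (H (update x l τ) q - H x q) * lamOf (update x l τ) i ^ (n - 1 - (q : ℕ)))
      (∑ q, pd (fun y => H y q) x l * lamOf x i ^ (n - 1 - (q : ℕ))) (x l) := by
    refine HasDerivAt.fun_sum fun q _ => ?_
    have hHq := ((hH.differentiableAt hx q).hasDerivAt_comp_update l).sub_const (H x q)
    rw [← pd_eq_fderiv (hH.differentiableAt hx q)] at hHq
    refine (hHq.fun_mul (hlam.fun_pow _)).congr_deriv ?_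
    simp [update_eq_self, lamOf]
  have heq : (fun τ => sepCurve f σ k (Sum.elim (cOf (update x l τ)) (H x))
        (lamOf (update x l τ) i) (muOf (update x l τ) i))
      =ᶠ[𝓝 (x l)] fun τ =>
        ∑ q, (H (update x l τ) q - H x q) * lamOf (update x l τ) i ^ (n - 1 - (q : ℕ)) := by
    filter_upwards [eventually_update_mem_Reg hx l] with τ hτ
    rw [← sepCurve_sub_sepCurve f σ k (cOf (update x l τ)) (H x) (H (update x l τ)), ← sepCoeffs,
      hH.sepCurve_eq_zero hτ, sub_zero]
  rw [(hR i).unique (hmoving.congr_of_eventuallyEq heq)]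
  simp [mulVec, dotProduct, lamVandermonde, mul_comm]

theorem pd_mu {x : Phase n N} (hx : x ∈ Reg n N) (a q : Fin n) :
    pd (fun y => H y q) x (Sum.inr (Sum.inl a))
      = (lamVandermonde x)⁻¹ q a * sepCurveDerivMu f k (lamOf x a) (muOf x a) := by
  refine hH.pd_eq_of_hasDerivAt hx _ a (fun i => ?_) q
  by_cases hi : i = a
  · subst hi
    simpa [lamOf, muOf, cOf_update_inr_inl, sepCoeffs] using
      hasDerivAt_sepCurve_mu f σ k (sepCoeffs H x) (lamOf x i) (muOf x i)
  · simpa [lamOf, muOf, cOf_update_inr_inl, hi] using hasDerivAt_const _ _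

theorem pd_lam {x : Phase n N} (hx : x ∈ Reg n N) (a q : Fin n) :
    pd (fun y => H y q) x (Sum.inl a)
      = (lamVandermonde x)⁻¹ q a
        * sepCurveDerivLam f σ k (sepCoeffs H x) (lamOf x a) (muOf x a) := by
  refine hH.pd_eq_of_hasDerivAt hx _ a (fun i => ?_) q
  by_cases hi : i = a
  · subst hi
    simpa [lamOf, muOf, cOf_update_inl, sepCoeffs] using
      hasDerivAt_sepCurve_lam f σ k (sepCoeffs H x) (hx.1 i) (muOf x i)
  · simpa [lamOf, muOf, cOf_update_inl, hi] using hasDerivAt_const _ _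

end SepSolP

end PhaseSpace

section PoissonMatrix

variable {n N : ℕ}

theorem mul_Pcan_mul_transpose_apply (A : Matrix (Idx n N) (Idx n N) ℝ) (a b : Idx n N) :
    (A * Pcan n N * Aᵀ) a b
      = ∑ i, (A a (Sum.inl i) * A b (Sum.inr (Sum.inl i))
          - A a (Sum.inr (Sum.inl i)) * A b (Sum.inl i)) := by
  simp only [Pcan, Finset.sum_sub_distrib, Matrix.mul_sub, Matrix.mul_sum, Matrix.mul_apply,
    Matrix.sub_apply, Matrix.sum_apply, single_apply, ite_and, mul_ite, mul_one, mul_zero,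
    Finset.sum_ite_eq, Finset.mem_univ, ↓reduceIte, transpose_apply, Fintype.sum_sum_type,
    reduceCtorEq, Finset.sum_const_zero, Sum.inl.injEq, Finset.sum_ite_eq', zero_sub, neg_mul,
    Finset.sum_neg_distrib, Sum.inr.injEq, sub_zero, zero_mul, add_zero]
  ring

theorem sum_comp_eq_sum_ite {M : Type*} [AddCommMonoid M] {r s : ℕ}
    {e : Fin (s - r) → Fin N} (he : ∀ j, (e j : ℕ) = r + j) (F : Fin N → M) :
    ∑ j, F (e j) = ∑ k : Fin N, if r ≤ (k : ℕ) ∧ (k : ℕ) < s then F k else 0 := by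
  rw [← Finset.sum_filter]
  refine Finset.sum_bij' (fun j _ => e j) (fun k hk => ⟨k - r, by simp at hk; omega⟩)
    (fun j _ => by simp [he]; omega) (fun _ _ => Finset.mem_univ _)
    (fun j _ => by ext; simp [he]) (fun k hk => by ext; simp at hk; simp [he]; omega)
    (fun _ _ => rfl)

-- Only the `λ`- and `μ`-columns of `J` enter `J * Pcan * Jᵀ`.
theorem mul_Pcan_mul_transpose_eq_of_rows {J : Matrix (Idx n N) (Idx n N) ℝ}
    {Y : Fin N → Phase n N} {β α B D : Fin n → ℝ} {w : Fin N → Fin n → ℝ}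
    (hJlam : ∀ a b, J (Sum.inl a) b = (Pi.single b 1 : Phase n N) (Sum.inl a))
    (hJmu : ∀ a b, J (Sum.inr (Sum.inl a)) b
      = β a * (Pi.single b 1 : Phase n N) (Sum.inr (Sum.inl a))
        + α a * (Pi.single b 1 : Phase n N) (Sum.inl a))
    (hJcLam : ∀ k i, J (Sum.inr (Sum.inr k)) (Sum.inl i) = w k i * D i)
    (hJcMu : ∀ k i, J (Sum.inr (Sum.inr k)) (Sum.inr (Sum.inl i)) = w k i * B i)
    (hYlam : ∀ k i, Y k (Sum.inl i) = w k i * B i)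
    (hYmu : ∀ k i, Y k (Sum.inr (Sum.inl i)) = -(w k i * (β i * D i - α i * B i)))
    (hYc : ∀ k k', Y k (Sum.inr (Sum.inr k')) = 0) :
    J * Pcan n N * Jᵀ
      = (∑ i, β i • (single (Sum.inl i) (Sum.inr (Sum.inl i)) (1 : ℝ)
          - single (Sum.inr (Sum.inl i)) (Sum.inl i) (1 : ℝ)))
        + ∑ k, (vecMulVec (Y k) (Pi.single (Sum.inr (Sum.inr k)) 1)
          - vecMulVec (Pi.single (Sum.inr (Sum.inr k)) 1) (Y k)) := by
  ext a b
  rw [mul_Pcan_mul_transpose_apply]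
  simp only [Matrix.add_apply, Matrix.sum_apply, Matrix.smul_apply, Matrix.sub_apply,
    vecMulVec_apply, single_apply, smul_eq_mul]
  rcases a with a | a | k <;> rcases b with b | b | k' <;>
    simp [hJlam, hJmu, hJcLam, hJcMu, hYlam, hYmu, hYc, Pi.single_apply, ite_and] <;>
    (try split_ifs) <;> (try subst_vars) <;>
    first | (rw [← Finset.sum_sub_distrib]; exact Finset.sum_eq_zero fun i _ => by ring) | ring

end PoissonMatrix

section MiuraMap

variable {n N : ℕ} (hn : 1 ≤ n) {r s : ℕ} {Hr : Phase n N → Fin n → ℝ} {x : Phase n N}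

theorem MrsP_mem_Reg (hx : x ∈ Reg n N) : MrsP n N hn r s Hr x ∈ Reg n N := hx

theorem sepCoeffs_MrsP {f σ : LaurentPolynomial ℝ} {Hs : Phase n N → Fin n → ℝ}
    (hrs : r ≤ s) (hsN : s ≤ N) (hNn : N ≤ n)
    (hHr : SepSolP n N f σ r Hr) (hHs : SepSolP n N f σ s Hs) (hx : x ∈ Reg n N) :
    sepCoeffs Hs (MrsP n N hn r s Hr x) = sepCoeffs Hr x ∘ miuraRelabel r s hsN hNn := by
  have hc : cOf (MrsP n N hn r s Hr x)
      = fun j => sepCoeffs Hr x (miuraRelabel r s hsN hNn (Sum.inl j)) := by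
    funext j
    simp only [cOf, MrsP, miuraRelabel, Sum.elim_inr]
    split_ifs <;> rfl
  have hH : Hs (MrsP n N hn r s Hr x)
      = fun q => sepCoeffs Hr x (miuraRelabel r s hsN hNn (Sum.inr q)) := by
    refine hHs.eq_of_sepCurve_eq_zero (MrsP_mem_Reg hn hx) fun i => ?_
    have hw : Sum.elim (cOf (MrsP n N hn r s Hr x))
        (fun q => sepCoeffs Hr x (miuraRelabel r s hsN hNn (Sum.inr q)))
        = sepCoeffs Hr x ∘ miuraRelabel r s hsN hNn := by
      funext u; rcases u with j | q
      · exact congrFun hc j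
      · rfl
    rw [hw]
    exact (sepCurve_comp_miuraRelabel hrs hsN hNn f σ _ (hx.1 i) (muOf x i)).trans
      (by rw [hHr.sepCurve_eq_zero hx i, mul_zero])
  funext u; rcases u with j | q
  · exact congrFun hc j
  · exact congrFun hH q

theorem XFP_MrsP_inl {f σ : LaurentPolynomial ℝ} {Hs : Phase n N → Fin n → ℝ}
    (hHs : SepSolP n N f σ s Hs) (hx : x ∈ Reg n N) (p i : Fin n) :
    XFP Hs p (MrsP n N hn r s Hr x) (Sum.inl i)
      = (lamVandermonde x)⁻¹ p i * sepCurveDerivMu f r (lamOf x i) (muOf x i) := by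
  rw [XFP, Sum.elim_inl, hHs.pd_mu (MrsP_mem_Reg hn hx)]
  exact congrArg _ (sepCurveDerivMu_rescale f (hx.1 i) (muOf x i))

theorem XFP_MrsP_inr_inl {f σ : LaurentPolynomial ℝ} {Hs : Phase n N → Fin n → ℝ}
    (hrs : r ≤ s) (hsN : s ≤ N) (hNn : N ≤ n)
    (hHr : SepSolP n N f σ r Hr) (hHs : SepSolP n N f σ s Hs) (hx : x ∈ Reg n N) (p i : Fin n) :
    XFP Hs p (MrsP n N hn r s Hr x) (Sum.inr (Sum.inl i))
      = -((lamVandermonde x)⁻¹ p i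
          * (lamOf x i ^ ((r : ℤ) - (s : ℕ))
              * sepCurveDerivLam f σ r (sepCoeffs Hr x) (lamOf x i) (muOf x i)
            - ((r : ℤ) - (s : ℕ) : ℤ) * lamOf x i ^ ((r : ℤ) - (s : ℕ) - 1) * muOf x i
              * sepCurveDerivMu f r (lamOf x i) (muOf x i))) := by
  rw [XFP, Sum.elim_inr, Sum.elim_inl, hHs.pd_lam (MrsP_mem_Reg hn hx),
    sepCoeffs_MrsP hn hrs hsN hNn hHr hHs hx]
  exact congrArg (fun d => -((lamVandermonde x)⁻¹ p i * d))
    (sepCurveDerivLam_comp_miuraRelabel hrs hsN hNn f σ _ (hx.1 i) (muOf x i)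
      (hHr.sepCurve_eq_zero hx i))

theorem Jac_apply_of_coord {M : Phase n N → Phase n N} {a : Idx n N} (hM : ∀ y, M y a = y a)
    (b : Idx n N) : Jac n N M x a b = (Pi.single b 1 : Phase n N) a := by
  simp only [Jac, of_apply, hM]
  rw [fderiv_apply differentiableAt_id]
  simp

theorem Jac_MrsP_inr_inl (hx : x ∈ Reg n N) (a : Fin n) (b : Idx n N) :
    Jac n N (MrsP n N hn r s Hr) x (Sum.inr (Sum.inl a)) b
      = lamOf x a ^ ((r : ℤ) - (s : ℕ)) * (Pi.single b 1 : Phase n N) (Sum.inr (Sum.inl a))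
        + ((r : ℤ) - (s : ℕ) : ℤ) * lamOf x a ^ ((r : ℤ) - (s : ℕ) - 1) * muOf x a
          * (Pi.single b 1 : Phase n N) (Sum.inl a) := by
  have hlam := hasFDerivAt_apply (𝕜 := ℝ) (Sum.inl a : Idx n N) x
  have hmu := hasFDerivAt_apply (𝕜 := ℝ) (Sum.inr (Sum.inl a) : Idx n N) x
  have hrow := ((hasDerivAt_zpow ((r : ℤ) - (s : ℕ)) _ (Or.inl (hx.1 a))).comp_hasFDerivAt x
    hlam).mul hmu
  refine (congrArg (fun L => L (Pi.single b 1)) hrow.fderiv).trans ?_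
  simp only [_root_.add_apply, _root_.smul_apply, ContinuousLinearMap.proj_apply, smul_eq_mul,
    Function.comp_apply, lamOf, muOf]
  ring

theorem Jac_MrsP_inr_inr {f σ : LaurentPolynomial ℝ} (hHr : SepSolP n N f σ r Hr)
    (hx : x ∈ Reg n N) (k : Fin N) (b : Idx n N) :
    Jac n N (MrsP n N hn r s Hr) x (Sum.inr (Sum.inr k)) b
      = if h : r ≤ (k : ℕ) ∧ (k : ℕ) < s then pd (fun y => Hr y ⟨n + r - (k : ℕ) - 1, by omega⟩) x b
        else (Pi.single b 1 : Phase n N) (Sum.inr (Sum.inr k)) := by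
  split_ifs with hk
  · rw [pd_eq_fderiv (hHr.differentiableAt hx _)]
    simp only [Jac, of_apply, MrsP, Sum.elim_inr, dif_pos hk]
  · exact Jac_apply_of_coord (fun y => by simp only [MrsP, Sum.elim_inr, dif_neg hk]; rfl) b

def miuraWeight (r s : ℕ) (x : Phase n N) (k : Fin N) (i : Fin n) : ℝ :=
  if h : r ≤ (k : ℕ) ∧ (k : ℕ) < s then (lamVandermonde x)⁻¹ ⟨n + r - (k : ℕ) - 1, by omega⟩ i
  else 0

theorem Jac_MrsP_inr_inr_inl {f σ : LaurentPolynomial ℝ} (hHr : SepSolP n N f σ r Hr)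
    (hx : x ∈ Reg n N) (k : Fin N) (i : Fin n) :
    Jac n N (MrsP n N hn r s Hr) x (Sum.inr (Sum.inr k)) (Sum.inl i)
      = miuraWeight hn r s x k i
        * sepCurveDerivLam f σ r (sepCoeffs Hr x) (lamOf x i) (muOf x i) := by
  rw [Jac_MrsP_inr_inr hn hHr hx, miuraWeight]
  split_ifs
  · exact hHr.pd_lam hx i _
  · simp

theorem Jac_MrsP_inr_inr_inr_inl {f σ : LaurentPolynomial ℝ} (hHr : SepSolP n N f σ r Hr)
    (hx : x ∈ Reg n N) (k : Fin N) (i : Fin n) :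
    Jac n N (MrsP n N hn r s Hr) x (Sum.inr (Sum.inr k)) (Sum.inr (Sum.inl i))
      = miuraWeight hn r s x k i * sepCurveDerivMu f r (lamOf x i) (muOf x i) := by
  rw [Jac_MrsP_inr_inr hn hHr hx, miuraWeight]
  split_ifs
  · exact hHr.pd_mu hx i _
  · simp

def miuraField (Hs : Phase n N → Fin n → ℝ) (r s : ℕ) (y : Phase n N) (k : Fin N) :
    Phase n N :=
  if h : r ≤ (k : ℕ) ∧ (k : ℕ) < s then XFP Hs ⟨n + r - (k : ℕ) - 1, by omega⟩ y else 0

theorem sum_vecMulVec_XFP_eq (Hs : Phase n N → Fin n → ℝ) (y : Phase n N)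
    {e : Fin (s - r) → Fin N} (he : ∀ j, (e j : ℕ) = r + j)
    {p : Fin (s - r) → Fin n} (hp : ∀ j, (p j : ℕ) = n - j - 1) :
    ∑ j, (vecMulVec (XFP Hs (p j) y) (Pi.single (Sum.inr (Sum.inr (e j))) 1)
          - vecMulVec (Pi.single (Sum.inr (Sum.inr (e j))) 1) (XFP Hs (p j) y))
      = ∑ k, (vecMulVec (miuraField hn Hs r s y k) (Pi.single (Sum.inr (Sum.inr k)) 1)
          - vecMulVec (Pi.single (Sum.inr (Sum.inr k)) 1) (miuraField hn Hs r s y k)) := by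
  have hfield : ∀ j, miuraField hn Hs r s y (e j) = XFP Hs (p j) y := fun j => by
    have hj := j.isLt
    have hej := he j
    rw [miuraField, dif_pos (by omega)]
    congr 2
    rw [hp]
    omega
  simp only [← hfield]
  refine (sum_comp_eq_sum_ite he (fun k => vecMulVec (miuraField hn Hs r s y k)
    (Pi.single (Sum.inr (Sum.inr k)) 1) - vecMulVec (Pi.single (Sum.inr (Sum.inr k)) 1)
      (miuraField hn Hs r s y k))).trans (Finset.sum_congr rfl fun k _ => ?_)
  split_ifs with hk
  · rfl
  · simp [miuraField, dif_neg hk]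

theorem miuraField_MrsP_inl {f σ : LaurentPolynomial ℝ} {Hs : Phase n N → Fin n → ℝ}
    (hHs : SepSolP n N f σ s Hs) (hx : x ∈ Reg n N) (k : Fin N) (i : Fin n) :
    miuraField hn Hs r s (MrsP n N hn r s Hr x) k (Sum.inl i)
      = miuraWeight hn r s x k i * sepCurveDerivMu f r (lamOf x i) (muOf x i) := by
  rw [miuraField, miuraWeight]
  split_ifs
  · exact XFP_MrsP_inl hn hHs hx _ i
  · simp

theorem miuraField_MrsP_inr_inl {f σ : LaurentPolynomial ℝ} {Hs : Phase n N → Fin n → ℝ}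
    (hrs : r ≤ s) (hsN : s ≤ N) (hNn : N ≤ n)
    (hHr : SepSolP n N f σ r Hr) (hHs : SepSolP n N f σ s Hs) (hx : x ∈ Reg n N)
    (k : Fin N) (i : Fin n) :
    miuraField hn Hs r s (MrsP n N hn r s Hr x) k (Sum.inr (Sum.inl i))
      = -(miuraWeight hn r s x k i
          * (lamOf x i ^ ((r : ℤ) - (s : ℕ))
              * sepCurveDerivLam f σ r (sepCoeffs Hr x) (lamOf x i) (muOf x i)
            - ((r : ℤ) - (s : ℕ) : ℤ) * lamOf x i ^ ((r : ℤ) - (s : ℕ) - 1) * muOf x i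
              * sepCurveDerivMu f r (lamOf x i) (muOf x i))) := by
  rw [miuraField, miuraWeight]
  split_ifs
  · exact XFP_MrsP_inr_inl hn hrs hsN hNn hHr hHs hx _ i
  · simp

theorem miuraField_inr_inr (Hs : Phase n N → Fin n → ℝ) (y : Phase n N) (k k' : Fin N) :
    miuraField hn Hs r s y k (Sum.inr (Sum.inr k')) = 0 := by
  rw [miuraField]
  split_ifs <;> rfl

end MiuraMap

/-- Theorem 2, formula (1), case `r < s`: for `0 ≤ r < s ≤ N`,
`J(x) P J(x)ᵀ = Σᵢ λᵢ^{r-s} (E_{i,n+i} - E_{n+i,i})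
  + Σ_{j=1}^{s-r} (X_{n-j+1}^{(s)}(ȳ) e_{2n+r+j}ᵀ - e_{2n+r+j} X_{n-j+1}^{(s)}(ȳ)ᵀ)`,
with `ȳ = M_{r→s}(x)`; i.e. the curve-`r` canonical Poisson bivector `π_r`, expressed in
the curve-`s` variables, equals
`Σᵢ λ̄ᵢ^{r-s} ∂/∂λ̄ᵢ ∧ ∂/∂μ̄ᵢ + Σ_{j=1}^{s-r} X_{n-j+1} ∧ ∂/∂c̄_{r+j}`. -/
theorem pi_r_in_curve_s_variables_case_r_lt_s
    (n N : ℕ) (hn : 1 ≤ n) (hNn : N ≤ n)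
    (f σ : LaurentPolynomial ℝ) (r s : ℕ) (hrs : r < s) (hsN : s ≤ N)
    (Hr Hs : Phase n N → Fin n → ℝ)
    (hHr : SepSolP n N f σ r Hr) (hHs : SepSolP n N f σ s Hs)
    (x : Phase n N) (hx : x ∈ Reg n N) :
    Jac n N (MrsP n N hn r s Hr) x * Pcan n N * (Jac n N (MrsP n N hn r s Hr) x)ᵀ
      = (∑ i : Fin n,
          lamOf x i ^ ((r : ℤ) - (s : ℕ)) •
            (Matrix.single (Sum.inl i) (Sum.inr (Sum.inl i)) (1 : ℝ)
              - Matrix.single (Sum.inr (Sum.inl i)) (Sum.inl i) (1 : ℝ)))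
        + ∑ j : Fin (s - r),
            (Matrix.vecMulVec
                (XFP Hs ⟨n - (j : ℕ) - 1, by omega⟩ (MrsP n N hn r s Hr x))
                (Pi.single (Sum.inr (Sum.inr
                  (⟨r + (j : ℕ), by have := j.isLt; omega⟩ : Fin N))) 1)
              - Matrix.vecMulVec
                (Pi.single (Sum.inr (Sum.inr
                  (⟨r + (j : ℕ), by have := j.isLt; omega⟩ : Fin N))) (1 : ℝ))
                (XFP Hs ⟨n - (j : ℕ) - 1, by omega⟩ (MrsP n N hn r s Hr x))) := by
  have hsum := sum_vecMulVec_XFP_eq hn (r := r) (s := s) Hs (MrsP n N hn r s Hr x)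
    (e := fun j => ⟨r + j, by have := j.isLt; omega⟩) (p := fun j => ⟨n - j - 1, by omega⟩)
    (fun _ => rfl) (fun _ => rfl)
  beta_reduce at hsum
  rw [hsum]
  exact mul_Pcan_mul_transpose_eq_of_rows
    (fun _ => Jac_apply_of_coord fun _ => rfl)
    (Jac_MrsP_inr_inl hn hx)
    (Jac_MrsP_inr_inr_inl hn hHr hx)
    (Jac_MrsP_inr_inr_inr_inl hn hHr hx)
    (miuraField_MrsP_inl hn hHs hx)
    (miuraField_MrsP_inr_inl hn hrs.le hsN hNn hHr hHs hx)
    (miuraField_inr_inr hn Hs _)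
end
end

section
/- (Multi-Hamiltonian representation, formula (bH).) Extend the family of Hamiltonians by setting h_j := c_{1−j} (the coordinate function) for j = 0, −1, …, −N+1. Then for every r ∈ {0,…,N}, every k ∈ {1,…,n} with k − r ≥ 1 − N, and every point x ∈ Ω × ℝⁿ × ℝᴺ: Π_r(x) · ∇h_{k−r}(x) = X_k(x), where ∇ denotes the gradient with respect to the ordered coordinates (λ_1,…,λ_n, μ_1,…,μ_n, c_1,…,c_N). In particular X_k = Π_0 ∇h_k = Π_1 ∇h_{k−1} = ⋯ = Π_N ∇h_{k−N} whenever the indices are defined, so each X_k is (N+1)-Hamiltonian. -/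
open Finset Function Matrix

noncomputable section

/-- The Poisson matrix `Π_a` (in the curve-0 coordinates) of the paper:
`Π_a(x) = Σᵢ λᵢᵃ (E_{i,n+i} - E_{n+i,i})
  + Σ_{j=1}^{a} (X_j(x) e_{2n+a-j+1}ᵀ - e_{2n+a-j+1} X_j(x)ᵀ)`,
where `X_j` is the `j`-th Hamiltonian vector field of the curve-0 system `H`
(1-based indexing in the paper; 0-based internally). -/
def PiMat (n N : ℕ) (hNn : N ≤ n) (a : ℕ) (haN : a ≤ N)
    (H : Phase n N → Fin n → ℝ) (x : Phase n N) : Matrix (Idx n N) (Idx n N) ℝ :=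
  (∑ i : Fin n,
      lamOf x i ^ a •
        (Matrix.single (Sum.inl i) (Sum.inr (Sum.inl i)) (1 : ℝ)
          - Matrix.single (Sum.inr (Sum.inl i)) (Sum.inl i) (1 : ℝ)))
    + ∑ j : Fin a,
        (Matrix.vecMulVec (XFP H ⟨(j : ℕ), by have := j.isLt; omega⟩ x)
            (Pi.single (Sum.inr (Sum.inr
              (⟨a - (j : ℕ) - 1, by have := j.isLt; omega⟩ : Fin N))) 1)
          - Matrix.vecMulVec
            (Pi.single (Sum.inr (Sum.inr
              (⟨a - (j : ℕ) - 1, by have := j.isLt; omega⟩ : Fin N))) (1 : ℝ))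
            (XFP H ⟨(j : ℕ), by have := j.isLt; omega⟩ x))


/-!
On `Ω` the separation relations read `V h = b`, where `V p q = λ_p ^ (n - 1 - q)` is an
invertible (reversed) Vandermonde matrix and `b` depends on `λ, μ, c` but not on `h`; in
particular `h` is smooth there (Cramer's rule). Differentiate along one coordinate. Only row `i`
of the system involves `λ_i` or `μ_i`, so `∂h/∂λ_i` and `∂h/∂μ_i` both lie on the line
`V⁻¹ ℝ e_i`. Being proportional, they make the Hamiltonians Poisson-commute, which kills the
`c`-rows of `Π_r ∇h_{k-r}`. Along `c_s` one gets `V ∂h/∂c_s = -(λ_p ^ (n + s))_p`, and comparing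
both sides in `V`-coordinates shows that every `u ∈ V⁻¹ ℝ e_i` satisfies the shift recursion
`λ_i ^ r u_m + ∑_{j<r} (∂h_m/∂c_{r-1-j}) u_j = u_{m+r}` (indices from `0`); with `u = ∂h/∂μ_i`
and `u = ∂h/∂λ_i` these are the `λ`- and `μ`-rows of `Π_r ∇h_{k-r} = X_k`. When `k ≤ r`,
`∇h_{k-r}` is a basis vector and the identity is a column of `Π_r`.
-/

open Filter Topology

namespace StaeckelSeparation

lemma pow_mul_sum_range_shift {R : Type*} [CommSemiring R] {n : ℕ} (z : R) {e : ℕ → R}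
    (he : ∀ t, n ≤ t → e t = 0) {r : ℕ} (hr : r ≤ n) :
    z ^ r * ∑ t ∈ range n, z ^ (n - 1 - t) * e t
      = ∑ t ∈ range r, z ^ (n + r - t - 1) * e t
        + ∑ q ∈ range n, z ^ (n - 1 - q) * e (q + r) := by
  obtain ⟨s, rfl⟩ : ∃ s, n = r + s := ⟨n - r, by omega⟩
  have hsplit := sum_range_add (fun t => z ^ r * (z ^ (r + s - 1 - t) * e t)) r s
  have htail : ∑ q ∈ range (r + s), z ^ (r + s - 1 - q) * e (q + r)
      = ∑ q ∈ range s, z ^ (r + s - 1 - q) * e (q + r) := by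
    have hzero : ∑ q ∈ range r, z ^ (r + s - 1 - (s + q)) * e (s + q + r) = 0 :=
      sum_eq_zero fun q _ => by rw [he _ (by omega), mul_zero]
    rw [show range (r + s) = range (s + r) by rw [add_comm], sum_range_add, hzero, add_zero]
  rw [mul_sum, hsplit, htail]
  congr 1
  · refine sum_congr rfl fun t ht => ?_
    rw [mem_range] at ht
    rw [← mul_assoc, ← pow_add]
    congr 2
    omega
  · refine sum_congr rfl fun q hq => ?_
    rw [mem_range] at hq
    rw [← mul_assoc, ← pow_add, add_comm r q]
    congr 2
    omega

section Vandermonde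

variable {R : Type*} [CommRing R] {n : ℕ}

def revVandermonde (v : Fin n → R) : Matrix (Fin n) (Fin n) R :=
  of fun p q => v p ^ (n - 1 - (q : ℕ))

lemma det_revVandermonde_ne_zero [IsDomain R] {v : Fin n → R} (hv : Injective v) :
    (revVandermonde v).det ≠ 0 := by
  have hrev : revVandermonde v = (vandermonde v).submatrix id Fin.revPerm := by
    ext p q
    simp only [revVandermonde, vandermonde, submatrix_apply, id_eq, of_apply,
      Fin.revPerm_apply, Fin.val_rev]
    congr 1
    omega
  rw [hrev, det_permute']
  refine mul_ne_zero ?_ (det_vandermonde_ne_zero_iff.mpr hv)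
  rcases Int.units_eq_one_or (Equiv.Perm.sign (Fin.revPerm (n := n))) with h | h <;> simp [h]

def shiftVec (r : ℕ) (u : Fin n → R) : Fin n → R :=
  fun q => if h : (q : ℕ) + r < n then u ⟨q + r, h⟩ else 0

lemma revVandermonde_mulVec_shiftVec (v u : Fin n → R) {r : ℕ} (hr : r ≤ n) (p : Fin n) :
    (revVandermonde v *ᵥ shiftVec r u) p
      = v p ^ r * (revVandermonde v *ᵥ u) p
        - ∑ j : Fin r, v p ^ (n + r - j - 1) * u ⟨j, by omega⟩ := by
  let e : ℕ → R := fun t => if h : t < n then u ⟨t, h⟩ else 0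
  have he : ∀ t, n ≤ t → e t = 0 := fun t ht => dif_neg (by omega)
  have hshift : (revVandermonde v *ᵥ shiftVec r u) p
      = ∑ q ∈ range n, v p ^ (n - 1 - q) * e (q + r) := by
    rw [← Fin.sum_univ_eq_sum_range (fun q => v p ^ (n - 1 - q) * e (q + r))]
    rfl
  have hu : (revVandermonde v *ᵥ u) p = ∑ t ∈ range n, v p ^ (n - 1 - t) * e t := by
    rw [← Fin.sum_univ_eq_sum_range (fun t => v p ^ (n - 1 - t) * e t)]
    simp [e, revVandermonde, mulVec, dotProduct]
  have hlow : ∑ j : Fin r, v p ^ (n + r - j - 1) * u ⟨j, by omega⟩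
      = ∑ t ∈ range r, v p ^ (n + r - t - 1) * e t := by
    rw [← Fin.sum_univ_eq_sum_range (fun t => v p ^ (n + r - t - 1) * e t)]
    exact sum_congr rfl fun j _ => by simp [e, show (j : ℕ) < n by omega]
  rw [hshift, hu, hlow, pow_mul_sum_range_shift _ he hr]
  ring

lemma revVandermonde_shift_recursion [IsDomain R] {v : Fin n → R} (hv : Injective v)
    {i : Fin n} {u : Fin n → R} (hu : ∀ p ≠ i, (revVandermonde v *ᵥ u) p = 0) {N : ℕ}
    {d : Fin N → Fin n → R} (hd : ∀ s, revVandermonde v *ᵥ d s = fun p => -v p ^ (n + s))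
    {r m : ℕ} (hrN : r ≤ N) (hm : m + r < n) :
    v i ^ r * u ⟨m, by omega⟩
        + ∑ j : Fin r, d ⟨r - j - 1, by omega⟩ ⟨m, by omega⟩ * u ⟨j, by omega⟩
      = u ⟨m + r, hm⟩ := by
  have hsupp : ∀ p, v i ^ r * (revVandermonde v *ᵥ u) p
      = v p ^ r * (revVandermonde v *ᵥ u) p := fun p => by
    by_cases hp : p = i
    · rw [hp]
    · rw [hu p hp, mul_zero, mul_zero]
  have hshift : v i ^ r • u + ∑ j : Fin r, u ⟨j, by omega⟩ • d ⟨r - j - 1, by omega⟩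
      = shiftVec r u := by
    refine mulVec_injective_of_det_ne_zero (det_revVandermonde_ne_zero hv) (funext fun p => ?_)
    simp only [revVandermonde_mulVec_shiftVec v u (by omega : r ≤ n), mulVec_add, mulVec_smul,
      mulVec_sum, hd, Pi.add_apply, Pi.smul_apply, smul_eq_mul, Finset.sum_apply, hsupp,
      sub_eq_add_neg, ← sum_neg_distrib]
    congr 1
    refine sum_congr rfl fun j _ => ?_
    rw [show n + (r - j - 1) = n + r - j - 1 by omega]
    ring
  have hm' := congrFun hshift ⟨m, by omega⟩
  simp only [Pi.add_apply, Pi.smul_apply, smul_eq_mul, Finset.sum_apply, shiftVec, dif_pos hm]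
    at hm'
  rw [← hm']
  exact congrArg _ (sum_congr rfl fun j _ => mul_comm _ _)

end Vandermonde

section SupportedSolutions

variable {R : Type*} [CommRing R] {m : Type*} [Fintype m] [DecidableEq m] {M : Matrix m m R}

lemma eq_smul_inv_mulVec_single (hM : IsUnit M.det) {i : m} {u : m → R}
    (hu : ∀ p ≠ i, (M *ᵥ u) p = 0) :
    u = (M *ᵥ u) i • (M⁻¹ *ᵥ Pi.single i 1) := by
  have hsingle : M *ᵥ u = (M *ᵥ u) i • Pi.single i 1 := by
    ext p
    by_cases hp : p = i
    · simp [hp]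
    · simp [hp, hu p hp]
  rw [← mulVec_smul, ← hsingle, mulVec_mulVec, nonsing_inv_mul _ hM, one_mulVec]

lemma mul_comm_of_mulVec_eq_zero_of_ne (hM : IsUnit M.det) {i : m} {u w : m → R}
    (hu : ∀ p ≠ i, (M *ᵥ u) p = 0) (hw : ∀ p ≠ i, (M *ᵥ w) p = 0) (j l : m) :
    u j * w l = u l * w j := by
  rw [eq_smul_inv_mulVec_single hM hu, eq_smul_inv_mulVec_single hM hw]
  simp only [Pi.smul_apply, smul_eq_mul]
  ring

end SupportedSolutions

section SeparationRelations

variable {n N : ℕ}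

def sepRhs (f σ : LaurentPolynomial ℝ) (y : Phase n N) (p : Fin n) : ℝ :=
  leval f (lamOf y p) * muOf y p ^ 2 - leval σ (lamOf y p)
    - ∑ j : Fin N, cOf y j * lamOf y p ^ (n + (j : ℕ))

lemma isOpen_reg : IsOpen (Reg n N) := by
  have hReg : Reg n N = (⋂ i, {x | lamOf x i ≠ 0})
      ∩ ⋂ i, ⋂ j, ⋂ (_ : i ≠ j), {x | lamOf x i ≠ lamOf x j} := by
    ext x
    simp only [Reg, Injective, Set.mem_ofPred_eq, Set.mem_inter_iff, Set.mem_iInter]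
    exact and_congr_right' ⟨fun h i j hij hx => hij (h hx),
      fun h i j hx => by_contra fun hij => h i j hij hx⟩
  rw [hReg]
  exact (isOpen_iInter_of_finite fun _ => isOpen_ne_fun (continuous_apply _) continuous_const).inter
    (isOpen_iInter_of_finite fun _ => isOpen_iInter_of_finite fun _ => isOpen_iInter_of_finite
      fun _ => isOpen_ne_fun (continuous_apply _) (continuous_apply _))

lemma differentiableAt_leval (p : LaurentPolynomial ℝ) {t : ℝ} (ht : t ≠ 0) :
    DifferentiableAt ℝ (leval p) t :=
  show DifferentiableAt ℝ (fun s => ∑ k ∈ p.coeff.support, p.coeff k * s ^ k) t from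
  DifferentiableAt.fun_sum fun _ _ => (differentiableAt_zpow.mpr (Or.inl ht)).const_mul _

lemma differentiableAt_det {𝕜 : Type*} [NontriviallyNormedField 𝕜] {E : Type*}
    [NormedAddCommGroup E] [NormedSpace 𝕜 E] {m : Type*} [Fintype m] [DecidableEq m]
    {M : E → Matrix m m 𝕜} {y : E} (h : ∀ i j, DifferentiableAt 𝕜 (fun y => M y i j) y) :
    DifferentiableAt 𝕜 (fun y => (M y).det) y := by
  simp only [det_apply']
  exact DifferentiableAt.fun_sum fun _ _ =>
    (HasFDerivAt.finsetProd fun _ _ => (h _ _).hasFDerivAt).differentiableAt.const_mul _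

lemma differentiableAt_revVandermonde_apply (x : Phase n N) (p q : Fin n) :
    DifferentiableAt ℝ (fun y : Phase n N => revVandermonde (lamOf y) p q) x := by
  simp only [revVandermonde, lamOf, of_apply]
  fun_prop

lemma differentiableAt_sepRhs (f σ : LaurentPolynomial ℝ) {x : Phase n N}
    (hx : ∀ i, lamOf x i ≠ 0) (p : Fin n) :
    DifferentiableAt ℝ (fun y => sepRhs f σ y p) x := by
  have hlev : ∀ g, DifferentiableAt ℝ (fun y : Phase n N => leval g (lamOf y p)) x :=
    fun g => (differentiableAt_leval g (hx p)).comp (f := fun y : Phase n N => lamOf y p) x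
      (differentiableAt_apply _ _)
  simp only [sepRhs, lamOf, muOf, cOf] at hlev ⊢
  exact (((hlev f).mul (by fun_prop)).sub (hlev σ)).sub (by fun_prop)

lemma sepRhs_update_c (f σ : LaurentPolynomial ℝ) (x : Phase n N) (j : Fin N) (t : ℝ)
    (p : Fin n) :
    sepRhs f σ (update x (Sum.inr (Sum.inr j)) t) p
      = sepRhs f σ x p + (cOf x j - t) * lamOf x p ^ (n + (j : ℕ)) := by
  have hlam : lamOf (update x (Sum.inr (Sum.inr j)) t) = lamOf x := by
    ext; simp [lamOf]
  have hmu : muOf (update x (Sum.inr (Sum.inr j)) t) = muOf x := by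
    ext; simp [muOf]
  have hc : ∀ i, cOf (update x (Sum.inr (Sum.inr j)) t) i * lamOf x p ^ (n + (i : ℕ))
      = cOf x i * lamOf x p ^ (n + (i : ℕ))
        + if i = j then (t - cOf x j) * lamOf x p ^ (n + (j : ℕ)) else 0 := fun i => by
    by_cases hij : i = j
    · simp only [hij, cOf, update_self, if_true]
      ring
    · simp [cOf, hij]
  rw [sepRhs, sepRhs, hlam, hmu, sum_congr rfl fun i _ => hc i, sum_add_distrib, sum_ite_eq',
    if_pos (mem_univ j)]
  ring

variable {f σ : LaurentPolynomial ℝ} {H : Phase n N → Fin n → ℝ} {x : Phase n N}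

lemma revVandermonde_mulVec_eq_sepRhs (hH : SepSolP n N f σ 0 H) (hx : x ∈ Reg n N) :
    revVandermonde (lamOf x) *ᵥ H x = sepRhs f σ x := by
  ext p
  have hsep := hH x hx p
  simp only [CharP.cast_eq_zero, neg_zero, zpow_zero, mul_one, sub_zero, zero_le,
    if_true] at hsep
  have hc : ∑ j : Fin N, cOf x j * lamOf x p ^ ((n : ℤ) + (j : ℕ))
      = ∑ j : Fin N, cOf x j * lamOf x p ^ (n + (j : ℕ)) :=
    sum_congr rfl fun j _ => by rw [← zpow_natCast]; push_cast; rfl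
  have hh : ∑ q : Fin n, H x q * lamOf x p ^ ((n : ℤ) - 1 - (q : ℕ))
      = (revVandermonde (lamOf x) *ᵥ H x) p := by
    refine sum_congr rfl fun q _ => ?_
    rw [show (n : ℤ) - 1 - (q : ℕ) = ((n - 1 - q : ℕ) : ℤ) by omega, zpow_natCast]
    exact mul_comm _ _
  rw [hc, hh] at hsep
  rw [sepRhs]
  linarith

lemma hamiltonian_eq_cramer (hH : SepSolP n N f σ 0 H) (hx : x ∈ Reg n N) (q : Fin n) :
    H x q = ((revVandermonde (lamOf x)).updateCol q (sepRhs f σ x)).det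
      / (revVandermonde (lamOf x)).det := by
  rw [← cramer_apply, ← revVandermonde_mulVec_eq_sepRhs hH hx, cramer_eq_adjugate_mulVec,
    mulVec_mulVec, adjugate_mul, smul_mulVec, one_mulVec, Pi.smul_apply, smul_eq_mul,
    mul_div_cancel_left₀ _ (det_revVandermonde_ne_zero hx.2)]

lemma differentiableAt_hamiltonian (hH : SepSolP n N f σ 0 H) (hx : x ∈ Reg n N)
    (q : Fin n) : DifferentiableAt ℝ (fun y => H y q) x := by
  have hcramer : (fun y => H y q) =ᶠ[𝓝 x] fun y =>
      ((revVandermonde (lamOf y)).updateCol q (sepRhs f σ y)).det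
        / (revVandermonde (lamOf y)).det :=
    eventually_of_mem (isOpen_reg.mem_nhds hx) fun y hy => hamiltonian_eq_cramer hH hy q
  simp only [hcramer.differentiableAt_iff, div_eq_mul_inv]
  refine DifferentiableAt.mul (differentiableAt_det fun a b => ?_)
    ((differentiableAt_det fun a b => differentiableAt_revVandermonde_apply x a b).inv
      (det_revVandermonde_ne_zero hx.2))
  by_cases hb : b = q
  · simpa [updateCol_apply, hb] using differentiableAt_sepRhs f σ hx.1 a
  · simpa [updateCol_apply, hb] using differentiableAt_revVandermonde_apply x a b

lemma hasDerivAt_pd {F : Phase n N → ℝ} (hF : DifferentiableAt ℝ F x) (l : Idx n N) :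
    HasDerivAt (fun t => F (update x l t)) (pd F x l) (x l) := by
  rw [← update_eq_self l x] at hF
  exact (hF.comp (x l) (hasDerivAt_update x l (x l)).differentiableAt).hasDerivAt

def dHam (H : Phase n N → Fin n → ℝ) (x : Phase n N) (l : Idx n N) : Fin n → ℝ :=
  fun q => pd (fun y => H y q) x l

lemma revVandermonde_mulVec_dHam_apply (hH : SepSolP n N f σ 0 H) (hx : x ∈ Reg n N)
    {l : Idx n N} {p : Fin n} (hpl : Sum.inl p ≠ l) {D : ℝ}
    (hD : HasDerivAt (fun t => sepRhs f σ (update x l t) p) D (x l)) :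
    (revVandermonde (lamOf x) *ᵥ dHam H x l) p = D := by
  have hreg : ∀ᶠ t in 𝓝 (x l), update x l t ∈ Reg n N :=
    (continuous_const.update l continuous_id).continuousAt.preimage_mem_nhds
      (isOpen_reg.mem_nhds (by rwa [id_eq, update_eq_self]))
  have hrow : (fun t => (revVandermonde (lamOf x) *ᵥ H (update x l t)) p)
      =ᶠ[𝓝 (x l)] fun t => sepRhs f σ (update x l t) p := by
    filter_upwards [hreg] with t ht
    rw [← revVandermonde_mulVec_eq_sepRhs hH ht]
    simp [mulVec, dotProduct, revVandermonde, lamOf, update_of_ne hpl]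
  have hderiv : HasDerivAt (fun t => ∑ q, revVandermonde (lamOf x) p q * H (update x l t) q)
      (∑ q, revVandermonde (lamOf x) p q * dHam H x l q) (x l) :=
    HasDerivAt.fun_sum fun q _ =>
      (hasDerivAt_pd (differentiableAt_hamiltonian hH hx q) l).const_mul _
  exact hderiv.unique (hD.congr_of_eventuallyEq hrow)

lemma revVandermonde_mulVec_dHam_lam (hH : SepSolP n N f σ 0 H) (hx : x ∈ Reg n N)
    {i p : Fin n} (hp : p ≠ i) :
    (revVandermonde (lamOf x) *ᵥ dHam H x (Sum.inl i)) p = 0 := by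
  refine revVandermonde_mulVec_dHam_apply hH hx (by simpa using hp) ?_
  simpa [sepRhs, lamOf, muOf, cOf, update_apply, hp] using hasDerivAt_const _ _

lemma revVandermonde_mulVec_dHam_mu (hH : SepSolP n N f σ 0 H) (hx : x ∈ Reg n N)
    {i p : Fin n} (hp : p ≠ i) :
    (revVandermonde (lamOf x) *ᵥ dHam H x (Sum.inr (Sum.inl i))) p = 0 := by
  refine revVandermonde_mulVec_dHam_apply hH hx (by simp) ?_
  simpa [sepRhs, lamOf, muOf, cOf, update_apply, hp] using hasDerivAt_const _ _

lemma revVandermonde_mulVec_dHam_c (hH : SepSolP n N f σ 0 H) (hx : x ∈ Reg n N)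
    (j : Fin N) :
    revVandermonde (lamOf x) *ᵥ dHam H x (Sum.inr (Sum.inr j))
      = fun p => -lamOf x p ^ (n + (j : ℕ)) := by
  ext p
  refine revVandermonde_mulVec_dHam_apply hH hx (by simp) ?_
  simp only [sepRhs_update_c f σ]
  simpa using ((((hasDerivAt_id (x (Sum.inr (Sum.inr j)))).const_sub (cOf x j)).mul_const
    (lamOf x p ^ (n + (j : ℕ)))).const_add (sepRhs f σ x p))

end SeparationRelations

section PoissonMatrix

variable {n N : ℕ} (hNn : N ≤ n) {r : ℕ} (hrN : r ≤ N) (H : Phase n N → Fin n → ℝ)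
  (x : Phase n N)

lemma PiMat_mulVec (v : Phase n N) :
    PiMat n N hNn r hrN H x *ᵥ v
      = Sum.elim (fun i => lamOf x i ^ r * v (Sum.inr (Sum.inl i)))
          (Sum.elim (fun i => -(lamOf x i ^ r * v (Sum.inl i))) 0)
        + ∑ j : Fin r,
          (v (Sum.inr (Sum.inr ⟨r - j - 1, by omega⟩)) • XFP H ⟨j, by omega⟩ x
            - (XFP H ⟨j, by omega⟩ x ⬝ᵥ v)
              • Pi.single (Sum.inr (Sum.inr ⟨r - j - 1, by omega⟩)) 1) := by
  rw [PiMat, add_mulVec, sum_mulVec, sum_mulVec]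
  congr 1
  · ext l
    rcases l with i | i | p <;> simp [mulVec, dotProduct, single_apply, ite_and]
  · refine sum_congr rfl fun j _ => ?_
    simp [sub_mulVec, vecMulVec_mulVec, single_dotProduct]

lemma PiMat_mulVec_single {s : ℕ} (hs : s < r) :
    PiMat n N hNn r hrN H x *ᵥ Pi.single (Sum.inr (Sum.inr ⟨s, by omega⟩)) 1
      = XFP H ⟨r - s - 1, by omega⟩ x := by
  have hsel : ∀ j : Fin r, r - j - 1 = s ↔ j = ⟨r - s - 1, by omega⟩ := fun j => by
    simp only [Fin.ext_iff]
    omega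
  rw [PiMat_mulVec]
  ext l
  rcases l with i | i | p <;> simp [XFP, dotProduct, Pi.single_apply, hsel, ite_smul]

variable {f σ : LaurentPolynomial ℝ} {H x}

lemma XFP_dotProduct_gradient_eq_zero (hH : SepSolP n N f σ 0 H) (hx : x ∈ Reg n N)
    (j m : Fin n) : XFP H j x ⬝ᵥ (fun l => pd (fun y => H y m) x l) = 0 := by
  simp only [dotProduct, Fintype.sum_sum_type, XFP, Sum.elim_inl, Sum.elim_inr, zero_mul,
    sum_const_zero, add_zero, ← sum_add_distrib]
  refine sum_eq_zero fun i _ => ?_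
  have hcomm := mul_comm_of_mulVec_eq_zero_of_ne (det_revVandermonde_ne_zero hx.2).isUnit
    (fun _ hp => revVandermonde_mulVec_dHam_mu hH hx (i := i) hp)
    (fun _ hp => revVandermonde_mulVec_dHam_lam hH hx hp) j m
  simp only [dHam] at hcomm
  linarith

lemma PiMat_mulVec_gradient (hH : SepSolP n N f σ 0 H) (hx : x ∈ Reg n N) {m : ℕ}
    (hm : m + r < n) :
    PiMat n N hNn r hrN H x *ᵥ (fun l => pd (fun y => H y ⟨m, by omega⟩) x l)
      = XFP H ⟨m + r, hm⟩ x := by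
  have hc := revVandermonde_mulVec_dHam_c hH hx
  rw [PiMat_mulVec]
  simp only [XFP_dotProduct_gradient_eq_zero hH hx, zero_smul, sub_zero]
  ext l
  rcases l with i | i | p
  · have := revVandermonde_shift_recursion hx.2
      (fun _ hp => revVandermonde_mulVec_dHam_mu hH hx hp) hc hrN hm (i := i)
    simpa [XFP, dHam] using this
  · have := revVandermonde_shift_recursion hx.2
      (fun _ hp => revVandermonde_mulVec_dHam_lam hH hx hp) hc hrN hm (i := i)
    simp only [dHam] at this
    simp only [XFP, Pi.add_apply, Sum.elim_inr, Sum.elim_inl, Finset.sum_apply, Pi.smul_apply,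
      smul_eq_mul, mul_neg, sum_neg_distrib]
    rw [← this]
    ring
  · simp [XFP]

end PoissonMatrix

end StaeckelSeparation


/-- multi-Hamiltonian representation, formula (bH): extending the family of
Hamiltonians by `h_j := c_{1-j}` (coordinate function) for `j = 0, -1, …, -N+1`, one has,
for every `r ∈ {0,…,N}` and `k ∈ {1,…,n}` with `k - r ≥ 1 - N`:
`Π_r(x) ∇h_{k-r}(x) = X_k(x)` on `Ω × ℝⁿ × ℝᴺ`.  In particular
`X_k = Π_0 ∇h_k = Π_1 ∇h_{k-1} = ⋯ = Π_N ∇h_{k-N}` whenever the indices are defined, so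
each `X_k` is `(N+1)`-Hamiltonian.  (Below: if `k - r ≥ 1` the gradient is that of the
Hamiltonian `h_{k-r}`, otherwise it is the gradient of the coordinate function
`c_{1-(k-r)} = c_{r-k+1}`, i.e. the corresponding standard basis vector; 1-based in the
paper, 0-based internally.) -/
theorem multi_hamiltonian_representation
    (n N : ℕ) (hNn : N ≤ n)
    (f σ : LaurentPolynomial ℝ)
    (H : Phase n N → Fin n → ℝ) (hH : SepSolP n N f σ 0 H)
    (r k : ℕ) (hrN : r ≤ N) (hk1 : 1 ≤ k) (hkn : k ≤ n)
    (hkr : 1 - (N : ℤ) ≤ (k : ℤ) - (r : ℤ))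
    (x : Phase n N) (hx : x ∈ Reg n N) :
    PiMat n N hNn r hrN H x *ᵥ
        (if h : r < k then
          (fun l => pd (fun y => H y ⟨k - r - 1, by omega⟩) x l)
        else Pi.single (Sum.inr (Sum.inr (⟨r - k, by omega⟩ : Fin N))) 1)
      = XFP H ⟨k - 1, by omega⟩ x := by
  split_ifs with hrk
  · have hm : k - r - 1 + r < n := by omega
    convert StaeckelSeparation.PiMat_mulVec_gradient hNn hrN hH hx hm using 2
    simp only [Fin.ext_iff]
    omega
  · convert StaeckelSeparation.PiMat_mulVec_single hNn hrN H x (s := r - k) (by omega) using 2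
    simp only [Fin.ext_iff]
    omega
end
end
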